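/- arXiv:1609.00595 — 2 statements merged into one kernel-verified Lean document; each statement's English description precedes it below -/
import Mathlib

section
/- Let P be a rooted finite poset and Q any finite poset, and K a field. Then the ideal J_{P,Q} is generated by special binomials, i.e. J_{P,Q} equals the ideal of T generated by all binomials ∏_{i=1}^d t_{φ_i} − ∏_{i=1}^d t_{φ′_i} that are special of some type (p, π) with respect to some isotone maps φ₁, …, φ_d. -/
/-!
The kernel of a map of polynomial rings sending monomials to monomials is spanned by the binomials
`m_a - m_b` with equal images. Write `m_a = ∏ t_{φᵢ}` and `m_b = ∏ t_{ψᵢ}`; equal images means that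
for every `p` the values `φᵢ(p)` and `ψᵢ(p)` agree up to a permutation `σ_p` of the indices. Grow a
lower set `S` on which `φᵢ = ψᵢ`: at a minimal `p ∉ S`, replacing `φᵢ` above `p` by `φ_{σ_p(i)}`
costs one special binomial of type `(p, σ_p)`, and the new maps agree with the `ψᵢ` on `S ∪ {p}`.
They are isotone because `P` is rooted: an element below some `q ≥ p` but not above `p` lies
below `p`.
-/

open MvPolynomial

/-- The `K`-algebra map sending the variable `t_φ` (indexed by an isotone map
`φ : P →o Q`) to the monomial `∏_{p ∈ P} x_{p, φ(p)}`. -/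
noncomputable def isotonianMap (K P Q : Type) [Field K] [PartialOrder P] [Fintype P]
    [PartialOrder Q] [Fintype Q] :
    MvPolynomial (P →o Q) K →ₐ[K] MvPolynomial (P × Q) K :=
  aeval fun φ : P →o Q => ∏ p : P, X (p, φ p)

/-- The defining ideal `J_{P,Q}` of the isotonian algebra `K[P,Q]`. -/
noncomputable def isotonianIdeal (K P Q : Type) [Field K] [PartialOrder P] [Fintype P]
    [PartialOrder Q] [Fintype Q] :
    Ideal (MvPolynomial (P →o Q) K) :=
  RingHom.ker (isotonianMap K P Q)

/-- `f` is a special binomial of some type `(p, π)` with respect to some family of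
isotone maps `φ₁, …, φ_d`: here `φ'ᵢ(q) = φ_{π(i)}(q)` for `q ≥ p`, `φ'ᵢ(q) = φᵢ(q)`
otherwise, and if `p` has a lower neighbor `p'` then `φ_{π(i)}(p) ≥ φᵢ(p')` for all `i`. -/
def IsSpecialBinomial (K P Q : Type) [Field K] [PartialOrder P] [Fintype P]
    [PartialOrder Q] [Fintype Q] (f : MvPolynomial (P →o Q) K) : Prop :=
  ∃ (d : ℕ) (φ φ' : Fin d → P →o Q) (p : P) (π : Equiv.Perm (Fin d)),
    (∀ p' : P, p' ⋖ p → ∀ i, φ i p' ≤ φ (π i) p) ∧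
    (∀ i q, p ≤ q → φ' i q = φ (π i) q) ∧
    (∀ i q, ¬ p ≤ q → φ' i q = φ i q) ∧
    f = (∏ i, X (φ i)) - ∏ i, X (φ' i)

open Finset

theorem Multiset.exists_fin_map_univ_eq {α : Type*} (s : Multiset α) :
    ∃ (d : ℕ) (f : Fin d → α), univ.val.map f = s :=
  ⟨s.toList.length, fun i => s.toList[i.1], by
    rw [Fin.univ_val_map, List.ofFn_getElem, Multiset.coe_toList]⟩

theorem MvPolynomial.exists_prod_X_eq_monomial {R σ : Type*} [CommSemiring R] (a : σ →₀ ℕ) :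
    ∃ (d : ℕ) (f : Fin d → σ), ∏ i, (X (f i) : MvPolynomial σ R) = monomial a 1 := by
  obtain ⟨d, f, hf⟩ := a.toMultiset.exists_fin_map_univ_eq
  refine ⟨d, f, ?_⟩
  rw [prod_eq_multiset_prod, ← Function.comp_def X f, ← Multiset.map_map, hf,
    Finsupp.toMultiset_map, Finsupp.prod_toMultiset,
    Finsupp.prod_mapDomain_index (fun _ => pow_zero _) (fun _ _ _ => pow_add _ _ _), monomial_eq,
    C_1, one_mul]

theorem exists_equiv_comp_eq_of_card_fiber_eq {ι κ α : Type*} [Finite ι] [Finite κ]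
    {f : ι → α} {g : κ → α} (h : ∀ a, Nat.card {i // f i = a} = Nat.card {k // g k = a}) :
    ∃ e : ι ≃ κ, ∀ i, g (e i) = f i :=
  ⟨Equiv.ofFiberEquiv fun a => (Finite.card_eq.1 (h a)).some, Equiv.ofFiberEquiv_map _⟩

theorem MvPolynomial.ker_le_of_monomial_sub_mem {R σ τ : Type*} [CommRing R]
    (f : MvPolynomial σ R →ₐ[R] MvPolynomial τ R)
    (hf : ∀ a, ∃ e, f (monomial a 1) = monomial e 1) (I : Ideal (MvPolynomial σ R))
    (hI : ∀ a b, f (monomial a 1) = f (monomial b 1) → monomial a 1 - monomial b 1 ∈ I) :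
    RingHom.ker f ≤ I := by
  classical
  choose E hE using hf
  have hEc : ∀ a c, f (monomial a c) = monomial (E a) c := fun a c => by
    rw [← mul_one c, ← C_mul_monomial, map_mul, algHom_C, hE, algebraMap_eq, C_mul_monomial]
  intro x hx
  rw [RingHom.mem_ker] at hx
  let s : (τ →₀ ℕ) → (σ →₀ ℕ) := fun e => Classical.epsilon fun a => E a = e
  have hs : ∀ a, E (s (E a)) = E a := fun a =>
    Classical.epsilon_spec (p := fun b => E b = E a) ⟨a, rfl⟩
  have hfiber : ∀ e, ∑ a ∈ x.support with E a = e, coeff a x = 0 := fun e => by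
    have := congr_arg (coeff e) hx
    rw [x.as_sum, map_sum, coeff_sum] at this
    simpa [hEc, coeff_monomial, sum_filter] using this
  -- Moving each `a` to the representative `s (E a)` of its fibre collects the terms of `x` fibre
  -- by fibre, and the coefficients in a fibre sum to a coefficient of `f x = 0`.
  have hy : ∑ a ∈ x.support, monomial (s (E a)) (coeff a x) = 0 := by
    rw [← sum_fiberwise_of_maps_to (g := E) (t := x.support.image E)
      fun a ha => mem_image_of_mem E ha]
    refine sum_eq_zero fun e _ => ?_
    rw [sum_congr rfl fun a ha => by rw [(mem_filter.1 ha).2], ← map_sum, hfiber, map_zero]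
  have hx' :
      x = ∑ a ∈ x.support, (monomial a (coeff a x) - monomial (s (E a)) (coeff a x)) := by
    rw [sum_sub_distrib, hy, sub_zero, ← as_sum]
  rw [hx']
  refine I.sum_mem fun a _ => ?_
  rw [← mul_one (coeff a x), ← C_mul_monomial, ← C_mul_monomial, ← mul_sub]
  exact I.mul_mem_left _ (hI _ _ (by rw [hE, hE, hs]))

theorem IsLowerSet.insert_of_forall_lt_mem {P : Type*} [PartialOrder P] {S : Set P} {p : P}
    (hS : IsLowerSet S) (hp : ∀ q < p, q ∈ S) : IsLowerSet (insert p S) := by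
  rintro a b hba (rfl | haS)
  · rcases hba.eq_or_lt with rfl | hlt
    · exact Set.mem_insert _ _
    · exact Set.mem_insert_of_mem _ (hp b hlt)
  · exact Set.mem_insert_of_mem _ (hS hba haS)

def OrderHom.piecewiseAbove {P Q : Type*} [Preorder P] [Preorder Q] [DecidableLE P]
    (hroot : ∀ a b c : P, a ≤ c → b ≤ c → a ≤ b ∨ b ≤ a) (p : P) (f g : P →o Q)
    (hfg : ∀ q < p, f q ≤ g p) : P →o Q where
  toFun q := if p ≤ q then g q else f q
  monotone' q₁ q₂ h := by
    by_cases h₁ : p ≤ q₁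
    · simp only [h₁, h₁.trans h, if_true]
      exact g.monotone h
    by_cases h₂ : p ≤ q₂
    · have hlt : q₁ < p := by
        rcases hroot q₁ p q₂ h h₂ with h' | h'
        · exact lt_of_le_not_ge h' h₁
        · exact absurd h' h₁
      simp only [h₁, h₂, if_true, if_false]
      exact (hfg q₁ hlt).trans (g.monotone h₂)
    · simp only [h₁, h₂, if_false]
      exact f.monotone h

section Isotonian

variable {P Q : Type} [PartialOrder P] [Fintype P] [PartialOrder Q]

noncomputable def isotonianExponent {ι : Type*} [Fintype ι] (φ : ι → P →o Q) :
    P × Q →₀ ℕ :=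
  ∑ p, ∑ i, Finsupp.single (p, φ i p) 1

theorem isotonianExponent_apply {ι : Type*} [Fintype ι] (φ : ι → P →o Q) (p : P) (q : Q) :
    isotonianExponent φ (p, q) = Nat.card {i // φ i p = q} := by
  classical
  simp only [isotonianExponent, Finsupp.coe_finsetSum, Finset.sum_apply, Finsupp.single_apply,
    Prod.mk.injEq, ite_and, Finset.sum_ite_irrel, Finset.sum_const_zero, Finset.sum_ite_eq',
    Finset.mem_univ, if_true, Finset.sum_boole, Nat.cast_id]
  rw [Nat.card_eq_fintype_card, Fintype.card_subtype]

variable {K : Type} [Field K] [Fintype Q]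

theorem isotonianMap_prod_X {ι : Type*} [Fintype ι] (φ : ι → P →o Q) :
    isotonianMap K P Q (∏ i, X (φ i)) = monomial (isotonianExponent φ) 1 := by
  simp only [map_prod, isotonianMap, aeval_X, isotonianExponent, monomial_sum_one]
  exact Finset.prod_comm

theorem IsSpecialBinomial.mem_isotonianIdeal {f : MvPolynomial (P →o Q) K}
    (hf : IsSpecialBinomial K P Q f) : f ∈ isotonianIdeal K P Q := by
  obtain ⟨d, φ, φ', p, π, -, habove, hbelow, rfl⟩ := hf
  rw [isotonianIdeal, RingHom.mem_ker, map_sub, sub_eq_zero, isotonianMap_prod_X,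
    isotonianMap_prod_X, isotonianExponent, isotonianExponent]
  refine congrArg (fun e => monomial e (1 : K)) (Finset.sum_congr rfl fun q _ => ?_)
  by_cases hq : p ≤ q
  · simp only [habove _ _ hq]
    exact (Equiv.sum_comp π fun i => Finsupp.single (q, φ i q) 1).symm
  · simp only [hbelow _ _ hq]

theorem isSpecialBinomial_piecewiseAbove [DecidableLE P]
    (hroot : ∀ a b c : P, a ≤ c → b ≤ c → a ≤ b ∨ b ≤ a) {d : ℕ} (φ : Fin d → P →o Q)
    (p : P) (π : Equiv.Perm (Fin d)) (hle : ∀ q < p, ∀ i, φ i q ≤ φ (π i) p) :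
    IsSpecialBinomial K P Q ((∏ i, X (φ i)) -
      ∏ i, X ((φ i).piecewiseAbove hroot p (φ (π i)) fun q hq => hle q hq i)) :=
  ⟨d, φ, _, p, π, fun q hq => hle q hq.lt, fun _ _ hq => if_pos hq, fun _ _ hq => if_neg hq,
    rfl⟩

theorem prod_X_sub_prod_X_mem_span_of_eqOn
    (hroot : ∀ a b c : P, a ≤ c → b ≤ c → a ≤ b ∨ b ≤ a) {d : ℕ} (S : Finset P)
    (hS : IsLowerSet (S : Set P)) (φ ψ : Fin d → P →o Q) (hφψ : ∀ i, ∀ q ∈ S, φ i q = ψ i q)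
    (hperm : ∀ q, ∃ σ : Equiv.Perm (Fin d), ∀ i, φ (σ i) q = ψ i q) :
    (∏ i, X (φ i) : MvPolynomial (P →o Q) K) - ∏ i, X (ψ i) ∈
      Ideal.span {f | IsSpecialBinomial K P Q f} := by
  classical
  induction S using WellFoundedGT.induction generalizing φ with
  | _ S ih =>
  by_cases hSu : ∀ q, q ∈ S
  · obtain rfl : φ = ψ := funext fun i => OrderHom.ext _ _ (funext fun q => hφψ i q (hSu q))
    rw [sub_self]
    exact zero_mem _
  push Not at hSu
  obtain ⟨p, hpS, hpmin⟩ := exists_minimal_of_wellFoundedLT (· ∉ S) hSu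
  have hlt : ∀ q < p, q ∈ S := fun q hq => by
    by_contra hqS
    exact hq.not_ge (hpmin hqS hq.le)
  obtain ⟨σ, hσ⟩ := hperm p
  have hle : ∀ q < p, ∀ i, φ i q ≤ φ (σ i) p := fun q hq i => by
    rw [hφψ i q (hlt q hq), hσ]
    exact (ψ i).monotone hq.le
  set φ' := fun i => (φ i).piecewiseAbove hroot p (φ (σ i)) fun q hq => hle q hq i
  have hφ'ψ : ∀ i, ∀ q ∈ insert p S, φ' i q = ψ i q := by
    intro i q hq
    rcases mem_insert.1 hq with rfl | hqS
    · exact (if_pos le_rfl).trans (hσ i)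
    · have hpq : ¬ p ≤ q := fun hpq => hpS (hS hpq hqS)
      exact (if_neg hpq).trans (hφψ i q hqS)
  have hperm' : ∀ q, ∃ τ : Equiv.Perm (Fin d), ∀ i, φ' (τ i) q = ψ i q := by
    intro q
    obtain ⟨τ, hτ⟩ := hperm q
    by_cases hpq : p ≤ q
    · refine ⟨τ.trans σ.symm, fun i => (if_pos hpq).trans ?_⟩
      simp [hτ]
    · exact ⟨τ, fun i => (if_neg hpq).trans (hτ i)⟩
  have hSp : IsLowerSet ((insert p S : Finset P) : Set P) := by
    rw [coe_insert]
    exact hS.insert_of_forall_lt_mem hlt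
  rw [← sub_add_sub_cancel _ (∏ i, X (φ' i))]
  exact add_mem (Ideal.subset_span (isSpecialBinomial_piecewiseAbove hroot φ p σ hle))
    (ih _ (ssubset_insert hpS) hSp φ' hφ'ψ hperm')

theorem prod_X_sub_prod_X_mem_span_of_isotonianMap_eq [Nonempty P]
    (hroot : ∀ a b c : P, a ≤ c → b ≤ c → a ≤ b ∨ b ≤ a) {d d' : ℕ}
    (φ : Fin d → P →o Q) (ψ : Fin d' → P →o Q)
    (h : isotonianMap K P Q (∏ i, X (φ i)) = isotonianMap K P Q (∏ i, X (ψ i))) :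
    (∏ i, X (φ i) : MvPolynomial (P →o Q) K) - ∏ i, X (ψ i) ∈
      Ideal.span {f | IsSpecialBinomial K P Q f} := by
  rw [isotonianMap_prod_X, isotonianMap_prod_X, (monomial_left_injective one_ne_zero).eq_iff] at h
  have hcard : ∀ p q, Nat.card {i // ψ i p = q} = Nat.card {i // φ i p = q} := fun p q => by
    rw [← isotonianExponent_apply, ← isotonianExponent_apply, h]
  obtain ⟨e, -⟩ := exists_equiv_comp_eq_of_card_fiber_eq (hcard (Classical.arbitrary P))
  obtain rfl := Fin.equiv_iff_eq.1 ⟨e⟩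
  refine prod_X_sub_prod_X_mem_span_of_eqOn hroot ∅ (by simp [isLowerSet_empty]) φ ψ (by simp)
    fun p => ?_
  obtain ⟨σ, hσ⟩ := exists_equiv_comp_eq_of_card_fiber_eq (hcard p)
  exact ⟨σ, hσ⟩

end Isotonian

/-- If `P` is rooted then `J_{P,Q}` is generated by special binomials. -/
theorem statement3 (K P Q : Type) [Field K] [PartialOrder P] [Fintype P]
    [PartialOrder Q] [Fintype Q]
    (hmin : ∃ p₀ : P, ∀ x : P, p₀ ≤ x)
    (hroot : ∀ a b c : P, a ≤ c → b ≤ c → a ≤ b ∨ b ≤ a) :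
    isotonianIdeal K P Q = Ideal.span {f | IsSpecialBinomial K P Q f} := by
  obtain ⟨p₀, -⟩ := hmin
  have : Nonempty P := ⟨p₀⟩
  refine le_antisymm (ker_le_of_monomial_sub_mem _ (fun a => ?_) _ fun a b hab => ?_)
    (Ideal.span_le.2 fun f hf => hf.mem_isotonianIdeal)
  · obtain ⟨d, φ, hφ⟩ := exists_prod_X_eq_monomial (R := K) a
    exact ⟨_, hφ ▸ isotonianMap_prod_X φ⟩
  · obtain ⟨d, φ, hφ⟩ := exists_prod_X_eq_monomial (R := K) a
    obtain ⟨d', ψ, hψ⟩ := exists_prod_X_eq_monomial (R := K) b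
    rw [← hφ, ← hψ] at hab ⊢
    exact prod_X_sub_prod_X_mem_span_of_isotonianMap_eq hroot φ ψ hab
end

section
/- Let P₁, P₂ and Q be finite posets and K a field. If J_{P₁,Q} is generated by squarefree binomials and J_{P₂,Q} is generated by squarefree binomials, then J_{P₁+P₂,Q} is generated by squarefree binomials, where P₁ + P₂ is the disjoint sum of P₁ and P₂. -/
open MvPolynomial

/-- A binomial `monomial u 1 - monomial v 1` which is squarefree: all exponents are at most 1. -/
def IsSquarefreeBinomial {σ K : Type} [Field K] (f : MvPolynomial σ K) : Prop :=
  ∃ u v : σ →₀ ℕ, (∀ i, u i ≤ 1) ∧ (∀ i, v i ≤ 1) ∧ f = monomial u 1 - monomial v 1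

/-!
`J_{P,Q}` is the toric ideal of the configuration sending an isotone map `φ` to (the indicator
of) its graph, so it is generated by squarefree binomials exactly when any two monomials with the
same image are connected by squarefree moves `t^u ↦ t^v` (`u`, `v` squarefree with the same
image). An isotone map on `P₁ + P₂` is a pair of isotone maps, and the image of a monomial records
exactly the images of its two marginals. Given `a`, `b` with the same image, first move the
`P₁`-marginal of `a` to that of `b`: a squarefree move of `P₁`-maps lifts by pairing the maps it
introduces with the `P₂`-halves of the factors it removes. Do the same for the `P₂`-marginal. Now
`a` and `b` have the same marginals, and such monomials are connected by quadratic swaps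
`(φ, ψ) + (φ', ψ') ↦ (φ, ψ') + (φ', ψ)`.
-/

open Finsupp (linearCombination single)

theorem Multiset.exists_add_of_map_eq_add {α β : Type*} {f : α → β} {s : Multiset α}
    {t₁ t₂ : Multiset β} (h : s.map f = t₁ + t₂) :
    ∃ s₁ s₂, s = s₁ + s₂ ∧ s₁.map f = t₁ ∧ s₂.map f = t₂ := by
  classical
  induction t₁ using Multiset.induction_on generalizing s with
  | empty => exact ⟨0, s, by simp, by simp, by simpa using h⟩
  | cons b t ih =>
    obtain ⟨a, ha, rfl⟩ : ∃ a ∈ s, f a = b :=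
      Multiset.mem_map.mp (h ▸ Multiset.mem_add.mpr (Or.inl (Multiset.mem_cons_self b t)))
    rw [← Multiset.cons_erase ha, Multiset.map_cons, Multiset.cons_add,
      Multiset.cons_inj_right] at h
    obtain ⟨s₁, s₂, hs, h₁, h₂⟩ := ih h
    refine ⟨a ::ₘ s₁, s₂, ?_, by rw [Multiset.map_cons, h₁], h₂⟩
    rw [Multiset.cons_add, ← hs, Multiset.cons_erase ha]

namespace Finsupp

variable {α β : Type*}

theorem exists_add_of_mapDomain_eq_add {f : α → β} {c : α →₀ ℕ} {x₁ x₂ : β →₀ ℕ}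
    (h : c.mapDomain f = x₁ + x₂) :
    ∃ c₁ c₂, c = c₁ + c₂ ∧ c₁.mapDomain f = x₁ ∧ c₂.mapDomain f = x₂ := by
  classical
  have hm : (toMultiset c).map f = toMultiset x₁ + toMultiset x₂ := by
    rw [toMultiset_map, h, map_add]
  obtain ⟨s₁, s₂, hs, h₁, h₂⟩ := Multiset.exists_add_of_map_eq_add hm
  refine ⟨Multiset.toFinsupp s₁, Multiset.toFinsupp s₂, ?_, ?_, ?_⟩ <;>
    apply Multiset.toFinsupp.symm.injective <;>
    simp [← toMultiset_map, *]

theorem apply_le_mapDomain_apply (f : α → β) (c : α →₀ ℕ) (a : α) :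
    c a ≤ c.mapDomain f (f a) := by
  classical
  rw [← count_toMultiset, ← count_toMultiset, ← toMultiset_map, Multiset.count_map,
    Multiset.count_eq_card_filter_eq]
  exact Multiset.card_le_card (Multiset.monotone_filter_right _ fun b h => congrArg f h)

theorem exists_mapDomain_fst_eq_and_mapDomain_snd_eq {x₁ : α →₀ ℕ} {x₂ : β →₀ ℕ}
    (h : x₁.degree = x₂.degree) :
    ∃ c : α × β →₀ ℕ, c.mapDomain Prod.fst = x₁ ∧ c.mapDomain Prod.snd = x₂ := by
  classical
  set l₁ := (toMultiset x₁).toList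
  set l₂ := (toMultiset x₂).toList
  have hlen : l₁.length = l₂.length := by
    simp only [l₁, l₂, Multiset.length_toList, card_toMultiset]
    exact h
  refine ⟨Multiset.toFinsupp (l₁.zip l₂ : Multiset (α × β)), ?_, ?_⟩ <;>
    apply Multiset.toFinsupp.symm.injective <;>
    simp [← toMultiset_map, List.map_fst_zip, List.map_snd_zip, hlen, l₁, l₂]

theorem single_add_single_apply_le_one {a b : α} (hab : a ≠ b) (i : α) :
    (single a 1 + single b 1 : α →₀ ℕ) i ≤ 1 := by
  classical
  simp only [add_apply, single_apply]
  split_ifs with ha hb <;> first | omega | exact absurd (ha.trans hb.symm) hab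

theorem single_add_single_le {a b : α} {c : α →₀ ℕ} (hab : a ≠ b) (ha : a ∈ c.support)
    (hb : b ∈ c.support) : single a 1 + single b 1 ≤ c := by
  classical
  intro i
  rw [mem_support_iff] at ha hb
  simp only [add_apply, single_apply]
  split_ifs with ha' hb' <;> subst_vars <;> first | omega | exact absurd rfl hab

theorem degree_linearCombination {σ τ : Type*} {E : σ → τ →₀ ℕ} {d : ℕ}
    (hE : ∀ s, (E s).degree = d) (x : σ →₀ ℕ) :
    (linearCombination ℕ E x).degree = d * x.degree := by
  induction x using induction_linear with
  | zero => simp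
  | add x y hx hy => rw [map_add, map_add, hx, hy, map_add, mul_add]
  | single s n => rw [linearCombination_single, map_nsmul, hE, degree_single,
      smul_eq_mul, mul_comm]

theorem eq_of_degree_eq [Subsingleton α] {x y : α →₀ ℕ} (h : x.degree = y.degree) :
    x = y := by
  have hdeg : ∀ (z : α →₀ ℕ) (s : α), z.degree = z s := fun z s => by
    have hz : z = single s (z s) := eq_single_iff.mpr
      ⟨fun t _ => Finset.mem_singleton.mpr (Subsingleton.elim t s), rfl⟩
    simpa using congrArg degree hz
  ext s
  rw [← hdeg x s, ← hdeg y s, h]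

end Finsupp

namespace MvPolynomial

variable {σ τ K : Type*} [CommRing K]

variable (K) in
def binomials (r : (σ →₀ ℕ) → (σ →₀ ℕ) → Prop) : Set (MvPolynomial σ K) :=
  {f | ∃ u v, r u v ∧ f = monomial u 1 - monomial v 1}

theorem monomial_sub_monomial_mem_span_of_addConGen {r : (σ →₀ ℕ) → (σ →₀ ℕ) → Prop}
    {x y : σ →₀ ℕ} (h : addConGen r x y) :
    monomial x (1 : K) - monomial y 1 ∈ Ideal.span (binomials K r) := by
  induction h with
  | of u v huv => exact Ideal.subset_span ⟨u, v, huv, rfl⟩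
  | refl => simp
  | symm _ ih => simpa using neg_mem ih
  | trans _ _ ih₁ ih₂ => simpa using add_mem ih₁ ih₂
  | @add w x y z _ _ ih₁ ih₂ =>
    have hmul : ∀ a b : σ →₀ ℕ, monomial (a + b) (1 : K) = monomial a 1 * monomial b 1 :=
      fun a b => by rw [monomial_mul, mul_one]
    have : monomial (w + y) (1 : K) - monomial (x + z) 1 =
        monomial y 1 * (monomial w 1 - monomial x 1) +
          monomial x 1 * (monomial y 1 - monomial z 1) := by
      rw [hmul, hmul]
      ring
    rw [this]
    exact add_mem (Ideal.mul_mem_left _ _ ih₁) (Ideal.mul_mem_left _ _ ih₂)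

theorem addConGen_of_monomial_sub_monomial_mem_span [Nontrivial K]
    {r : (σ →₀ ℕ) → (σ →₀ ℕ) → Prop} {x y : σ →₀ ℕ}
    (h : monomial x (1 : K) - monomial y 1 ∈ Ideal.span (binomials K r)) :
    addConGen r x y := by
  -- pass to the monoid algebra of the quotient monoid, where every generator vanishes
  let q : MvPolynomial σ K →+* AddMonoidAlgebra K (addConGen r).Quotient :=
    AddMonoidAlgebra.mapDomainRingHom K (addConGen r).mk'
  have hq : ∀ u, q (monomial u 1) = AddMonoidAlgebra.single ((addConGen r).mk' u) 1 :=
    fun _ => AddMonoidAlgebra.mapDomain_single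
  have hspan : Ideal.span (binomials K r) ≤ RingHom.ker q := by
    rw [Ideal.span_le]
    rintro _ ⟨u, v, huv, rfl⟩
    rw [SetLike.mem_coe, RingHom.mem_ker, map_sub, hq, hq, sub_eq_zero]
    exact congrArg (AddMonoidAlgebra.single · 1) ((AddCon.eq _).mpr (AddConGen.Rel.of u v huv))
  have hxy := RingHom.mem_ker.mp (hspan h)
  rw [map_sub, hq, hq, sub_eq_zero, AddMonoidAlgebra.single_left_inj one_ne_zero] at hxy
  exact (AddCon.eq _).mp hxy

variable (E : σ → τ →₀ ℕ)

variable (K) in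
noncomputable def toricMap : MvPolynomial σ K →ₐ[K] MvPolynomial τ K :=
  aeval fun s => monomial (E s) 1

theorem toricMap_monomial (u : σ →₀ ℕ) (c : K) :
    toricMap K E (monomial u c) = monomial (linearCombination ℕ E u) c := by
  rw [toricMap, aeval_monomial, Finsupp.linearCombination_apply, monomial_finsupp_sum_index,
    algebraMap_eq]
  congr 1
  exact Finsupp.prod_congr fun s _ => by rw [monomial_pow, one_pow]

theorem ker_toricMap_le_span_binomials :
    RingHom.ker (toricMap K E) ≤
      Ideal.span (binomials K fun u v => linearCombination ℕ E u = linearCombination ℕ E v) := by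
  intro p hp
  set I := Ideal.span (binomials K fun u v => linearCombination ℕ E u = linearCombination ℕ E v)
  -- modulo `I`, every monomial equals the chosen representative `g _` of its fibre
  set g := Function.invFun (linearCombination ℕ E)
  have hg : ∀ u, linearCombination ℕ E (g (linearCombination ℕ E u)) = linearCombination ℕ E u :=
    fun u => Function.invFun_eq ⟨u, rfl⟩
  have key : ∀ q : MvPolynomial σ K,
      q - AddMonoidAlgebra.mapDomain g (toricMap K E q) ∈ I := by
    intro q
    induction q using induction_on' with
    | monomial u c =>
      have hmap : AddMonoidAlgebra.mapDomain g (monomial (linearCombination ℕ E u) c) =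
          monomial (g (linearCombination ℕ E u)) c := AddMonoidAlgebra.mapDomain_single
      rw [toricMap_monomial, hmap, ← mul_one c, ← smul_eq_mul, ← smul_monomial,
        ← smul_monomial, ← smul_sub]
      exact Submodule.smul_of_tower_mem _ c (Ideal.subset_span ⟨u, _, (hg u).symm, rfl⟩)
    | add q r hq hr =>
      rw [map_add, AddMonoidAlgebra.mapDomain_add, add_sub_add_comm]
      exact I.add_mem hq hr
  simpa [RingHom.mem_ker.mp hp] using key p

end MvPolynomial

section Configuration

variable {σ τ : Type*} (E : σ → τ →₀ ℕ)

def IsSquarefreeMove (u v : σ →₀ ℕ) : Prop :=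
  (∀ i, u i ≤ 1) ∧ (∀ i, v i ≤ 1) ∧ linearCombination ℕ E u = linearCombination ℕ E v

def IsSquarefreeConnected : Prop :=
  ∀ x y, linearCombination ℕ E x = linearCombination ℕ E y →
    addConGen (IsSquarefreeMove E) x y

def IsHomogeneousSquarefreeMove (u v : σ →₀ ℕ) : Prop :=
  IsSquarefreeMove E u v ∧ u.degree = v.degree

/-- Only moves preserving the number of factors lift along a marginal, so the product argument
works with this variant; when all `E s` have the same positive degree it is equivalent to
`IsSquarefreeConnected E`. -/
def IsHomogeneousSquarefreeConnected : Prop :=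
  ∀ x y, linearCombination ℕ E x = linearCombination ℕ E y → x.degree = y.degree →
    addConGen (IsHomogeneousSquarefreeMove E) x y

variable {E}

theorem isSquarefreeConnected_iff_homogeneous
    (hE : ∀ x y, linearCombination ℕ E x = linearCombination ℕ E y → x.degree = y.degree) :
    IsSquarefreeConnected E ↔ IsHomogeneousSquarefreeConnected E := by
  have hmove : IsHomogeneousSquarefreeMove E = IsSquarefreeMove E := by
    ext u v
    exact and_iff_left_of_imp fun h => hE u v h.2.2
  simp only [IsSquarefreeConnected, IsHomogeneousSquarefreeConnected, hmove]
  exact forall₂_congr fun x y => ⟨fun h hxy _ => h hxy, fun h hxy => h hxy (hE x y hxy)⟩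

theorem IsHomogeneousSquarefreeConnected.of_subsingleton [Subsingleton σ] :
    IsHomogeneousSquarefreeConnected E := fun x _ _ h =>
  Finsupp.eq_of_degree_eq h ▸ AddCon.refl _ x

theorem IsSquarefreeConnected.of_forall_eq_zero (hE : ∀ s, E s = 0) :
    IsSquarefreeConnected E := by
  classical
  have hsingle : ∀ s, addConGen (IsSquarefreeMove E) (single s 1) 0 := fun s =>
    AddConGen.Rel.of _ _ ⟨fun i => by rw [Finsupp.single_apply]; split_ifs <;> simp,
      fun _ => zero_le_one, by simp [hE]⟩
  have hzero : ∀ x, addConGen (IsSquarefreeMove E) x 0 := by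
    intro x
    induction x using Finsupp.induction with
    | zero => exact AddCon.refl _ 0
    | single_add s n x _ _ ih =>
      rw [← zero_add 0, ← smul_zero n, ← Finsupp.smul_single_one]
      exact AddCon.add _ (AddCon.nsmul _ n (hsingle s)) ih
  exact fun x y _ => AddCon.trans _ (hzero x) (AddCon.symm _ (hzero y))

end Configuration

namespace MvPolynomial

variable {σ τ K : Type} {E : σ → τ →₀ ℕ}

theorem monomial_sub_monomial_mem_ker_toricMap_iff [CommRing K] [Nontrivial K]
    {u v : σ →₀ ℕ} :
    monomial u (1 : K) - monomial v 1 ∈ RingHom.ker (toricMap K E) ↔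
      linearCombination ℕ E u = linearCombination ℕ E v := by
  rw [RingHom.mem_ker, map_sub, toricMap_monomial, toricMap_monomial, sub_eq_zero,
    monomial_left_inj one_ne_zero]

theorem setOf_mem_ker_toricMap_and_isSquarefreeBinomial [Field K] :
    {f | f ∈ RingHom.ker (toricMap K E) ∧ IsSquarefreeBinomial f} =
      binomials K (IsSquarefreeMove E) := by
  ext f
  constructor
  · rintro ⟨hf, u, v, hu, hv, rfl⟩
    exact ⟨u, v, ⟨hu, hv, monomial_sub_monomial_mem_ker_toricMap_iff.mp hf⟩, rfl⟩
  · rintro ⟨u, v, ⟨hu, hv, huv⟩, rfl⟩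
    exact ⟨monomial_sub_monomial_mem_ker_toricMap_iff.mpr huv, u, v, hu, hv, rfl⟩

theorem ker_toricMap_eq_span_squarefree_iff [Field K] :
    RingHom.ker (toricMap K E) =
        Ideal.span {f | f ∈ RingHom.ker (toricMap K E) ∧ IsSquarefreeBinomial f} ↔
      IsSquarefreeConnected E := by
  rw [setOf_mem_ker_toricMap_and_isSquarefreeBinomial]
  constructor
  · intro h x y hxy
    apply addConGen_of_monomial_sub_monomial_mem_span (K := K)
    rw [← h]
    exact monomial_sub_monomial_mem_ker_toricMap_iff.mpr hxy
  · intro h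
    refine le_antisymm ((ker_toricMap_le_span_binomials E).trans ?_) ?_
    · rw [Ideal.span_le]
      rintro _ ⟨u, v, huv, rfl⟩
      exact monomial_sub_monomial_mem_span_of_addConGen (h u v huv)
    · rw [Ideal.span_le]
      rintro _ ⟨u, v, ⟨-, -, huv⟩, rfl⟩
      exact monomial_sub_monomial_mem_ker_toricMap_iff.mpr huv

end MvPolynomial

section Product

variable {σ σ₁ σ₂ τ τ₁ τ₂ : Type} {E : σ → τ →₀ ℕ} {E₁ : σ₁ → τ₁ →₀ ℕ} {E₂ : σ₂ → τ₂ →₀ ℕ}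
  {e : σ ≃ σ₁ × σ₂}

variable (E E₁ E₂ e) in
def IsProductConfiguration : Prop :=
  ∀ x y : σ →₀ ℕ, linearCombination ℕ E x = linearCombination ℕ E y ↔
    linearCombination ℕ E₁ (x.mapDomain (Prod.fst ∘ e)) =
        linearCombination ℕ E₁ (y.mapDomain (Prod.fst ∘ e)) ∧
      linearCombination ℕ E₂ (x.mapDomain (Prod.snd ∘ e)) =
        linearCombination ℕ E₂ (y.mapDomain (Prod.snd ∘ e))

variable (E e) in
def LiftsAlongFst (x y : σ₁ →₀ ℕ) : Prop :=
  ∀ a : σ →₀ ℕ, a.mapDomain (Prod.fst ∘ e) = x →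
    ∃ b, addConGen (IsHomogeneousSquarefreeMove E) a b ∧ b.mapDomain (Prod.fst ∘ e) = y ∧
      b.mapDomain (Prod.snd ∘ e) = a.mapDomain (Prod.snd ∘ e)

namespace LiftsAlongFst

theorem refl (x : σ₁ →₀ ℕ) : LiftsAlongFst E e x x :=
  fun a ha => ⟨a, AddCon.refl _ a, ha, rfl⟩

theorem trans {x y z : σ₁ →₀ ℕ} (hxy : LiftsAlongFst E e x y) (hyz : LiftsAlongFst E e y z) :
    LiftsAlongFst E e x z := by
  intro a ha
  obtain ⟨b, hab, hb₁, hb₂⟩ := hxy a ha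
  obtain ⟨c, hbc, hc₁, hc₂⟩ := hyz b hb₁
  exact ⟨c, AddCon.trans _ hab hbc, hc₁, hc₂.trans hb₂⟩

theorem add {x₁ y₁ x₂ y₂ : σ₁ →₀ ℕ} (h₁ : LiftsAlongFst E e x₁ y₁)
    (h₂ : LiftsAlongFst E e x₂ y₂) : LiftsAlongFst E e (x₁ + x₂) (y₁ + y₂) := by
  intro a ha
  obtain ⟨a₁, a₂, rfl, ha₁, ha₂⟩ := Finsupp.exists_add_of_mapDomain_eq_add ha
  obtain ⟨b₁, hab₁, hb₁, hb₁'⟩ := h₁ a₁ ha₁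
  obtain ⟨b₂, hab₂, hb₂, hb₂'⟩ := h₂ a₂ ha₂
  refine ⟨b₁ + b₂, AddCon.add _ hab₁ hab₂, ?_, ?_⟩ <;>
    simp only [Finsupp.mapDomain_add, *]

end LiftsAlongFst

namespace IsProductConfiguration

theorem swap (hE : IsProductConfiguration E E₁ E₂ e) :
    IsProductConfiguration E E₂ E₁ (e.trans (Equiv.prodComm σ₁ σ₂)) :=
  fun x y => (hE x y).trans and_comm

theorem liftsAlongFst_of_isHomogeneousSquarefreeMove (hE : IsProductConfiguration E E₁ E₂ e)
    {u v : σ₁ →₀ ℕ} (huv : IsHomogeneousSquarefreeMove E₁ u v) : LiftsAlongFst E e u v := by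
  obtain ⟨⟨hu, hv, huv⟩, hdeg⟩ := huv
  intro a ha
  have hdeg' : v.degree = (a.mapDomain (Prod.snd ∘ e)).degree := by
    rw [← hdeg, ← ha, Finsupp.degree_mapDomain, Finsupp.degree_mapDomain]
  obtain ⟨c, hc₁, hc₂⟩ := Finsupp.exists_mapDomain_fst_eq_and_mapDomain_snd_eq hdeg'
  have hmarg : ∀ {ρ : Type} (g : σ₁ × σ₂ → ρ), (c.mapDomain e.symm).mapDomain (g ∘ e) =
      c.mapDomain g := fun g => by
    rw [← Finsupp.mapDomain_comp, Function.comp_assoc, e.self_comp_symm, Function.comp_id]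
  have hb₁ := (hmarg Prod.fst).trans hc₁
  have hb₂ := (hmarg Prod.snd).trans hc₂
  refine ⟨c.mapDomain e.symm, AddConGen.Rel.of _ _ ⟨⟨?_, ?_, ?_⟩, ?_⟩, hb₁, hb₂⟩
  · exact fun s => (Finsupp.apply_le_mapDomain_apply _ a s).trans (ha ▸ hu _)
  · exact fun s => (Finsupp.apply_le_mapDomain_apply _ _ s).trans (hb₁ ▸ hv _)
  · exact (hE _ _).mpr ⟨by rw [ha, hb₁, huv], by rw [hb₂]⟩
  · rw [← Finsupp.degree_mapDomain (Prod.fst ∘ e) a, ha, hdeg, ← hb₁, Finsupp.degree_mapDomain]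

theorem liftsAlongFst_of_addConGen (hE : IsProductConfiguration E E₁ E₂ e) {x y : σ₁ →₀ ℕ}
    (hxy : addConGen (IsHomogeneousSquarefreeMove E₁) x y) : LiftsAlongFst E e x y := by
  -- both directions at once, so that the `symm` case goes through
  suffices ∀ x y, addConGen (IsHomogeneousSquarefreeMove E₁) x y →
      LiftsAlongFst E e x y ∧ LiftsAlongFst E e y x from (this x y hxy).1
  intro x y hxy
  induction hxy with
  | of u v huv =>
    exact ⟨hE.liftsAlongFst_of_isHomogeneousSquarefreeMove huv,
      hE.liftsAlongFst_of_isHomogeneousSquarefreeMove ⟨⟨huv.1.2.1, huv.1.1, huv.1.2.2.symm⟩,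
        huv.2.symm⟩⟩
  | refl x => exact ⟨.refl x, .refl x⟩
  | symm _ ih => exact ih.symm
  | trans _ _ ih₁ ih₂ => exact ⟨ih₁.1.trans ih₂.1, ih₂.2.trans ih₁.2⟩
  | add _ _ ih₁ ih₂ => exact ⟨ih₁.1.add ih₂.1, ih₁.2.add ih₂.2⟩

theorem isHomogeneousSquarefreeMove_of_mapDomain_eq (hE : IsProductConfiguration E E₁ E₂ e)
    {u v : σ →₀ ℕ} (hu : ∀ i, u i ≤ 1) (hv : ∀ i, v i ≤ 1)
    (h₁ : u.mapDomain (Prod.fst ∘ e) = v.mapDomain (Prod.fst ∘ e))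
    (h₂ : u.mapDomain (Prod.snd ∘ e) = v.mapDomain (Prod.snd ∘ e)) :
    IsHomogeneousSquarefreeMove E u v :=
  ⟨⟨hu, hv, (hE u v).mpr ⟨by rw [h₁], by rw [h₂]⟩⟩, by
    rw [← Finsupp.degree_mapDomain (Prod.fst ∘ e) u, h₁, Finsupp.degree_mapDomain]⟩

theorem exists_addConGen_single_add (hE : IsProductConfiguration E E₁ E₂ e) {b : σ →₀ ℕ}
    {χ : σ} (h₁ : (e χ).1 ∈ (b.mapDomain (Prod.fst ∘ e)).support)
    (h₂ : (e χ).2 ∈ (b.mapDomain (Prod.snd ∘ e)).support) :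
    ∃ b₀, addConGen (IsHomogeneousSquarefreeMove E) b (single χ 1 + b₀) ∧
      (single χ 1 + b₀).mapDomain (Prod.fst ∘ e) = b.mapDomain (Prod.fst ∘ e) ∧
      (single χ 1 + b₀).mapDomain (Prod.snd ∘ e) = b.mapDomain (Prod.snd ∘ e) := by
  classical
  by_cases hχ : χ ∈ b.support
  · refine ⟨b - single χ 1, ?_⟩
    rw [add_tsub_cancel_of_le (Finsupp.single_le_iff.mpr
      (Nat.one_le_iff_ne_zero.mpr (Finsupp.mem_support_iff.mp hχ)))]
    exact ⟨AddCon.refl _ b, rfl, rfl⟩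
  obtain ⟨χ₁, hχ₁, he₁⟩ := Finset.mem_image.mp (Finsupp.mapDomain_support h₁)
  obtain ⟨χ₂, hχ₂, he₂⟩ := Finset.mem_image.mp (Finsupp.mapDomain_support h₂)
  -- trade `χ₁ + χ₂` in `b` for `χ + δ`, where `δ` carries the remaining two halves
  set δ := e.symm ((e χ₂).1, (e χ₁).2)
  have hδ : e δ = ((e χ₂).1, (e χ₁).2) := e.apply_symm_apply _
  have hne : χ₁ ≠ χ₂ := by
    rintro rfl
    exact hχ (e.injective (Prod.ext he₁ he₂) ▸ hχ₁)
  have hne' : χ ≠ δ := by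
    intro h
    have : e χ₁ = e χ := Prod.ext he₁ (by rw [h, hδ])
    exact hχ (e.injective this ▸ hχ₁)
  set L := single χ₁ 1 + single χ₂ 1
  set R := single χ 1 + single δ 1
  have hLR₁ : L.mapDomain (Prod.fst ∘ e) = R.mapDomain (Prod.fst ∘ e) := by
    simp only [L, R, Finsupp.mapDomain_add, Finsupp.mapDomain_single, Function.comp_apply, hδ,
      ← he₁]
  have hLR₂ : L.mapDomain (Prod.snd ∘ e) = R.mapDomain (Prod.snd ∘ e) := by
    simp only [L, R, Finsupp.mapDomain_add, Finsupp.mapDomain_single, Function.comp_apply, hδ,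
      ← he₂, add_comm]
  have hmove : IsHomogeneousSquarefreeMove E L R := hE.isHomogeneousSquarefreeMove_of_mapDomain_eq
    (Finsupp.single_add_single_apply_le_one hne) (Finsupp.single_add_single_apply_le_one hne')
    hLR₁ hLR₂
  have hb : L + (b - L) = b := add_tsub_cancel_of_le (Finsupp.single_add_single_le hne hχ₁ hχ₂)
  refine ⟨single δ 1 + (b - L), ?_, ?_, ?_⟩ <;> rw [← add_assoc]
  · nth_rw 1 [← hb]
    exact AddCon.add _ (AddConGen.Rel.of _ _ hmove) (AddCon.refl _ _)
  · rw [Finsupp.mapDomain_add, ← hLR₁, ← Finsupp.mapDomain_add, hb]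
  · rw [Finsupp.mapDomain_add, ← hLR₂, ← Finsupp.mapDomain_add, hb]

theorem addConGen_of_mapDomain_eq (hE : IsProductConfiguration E E₁ E₂ e) {a b : σ →₀ ℕ}
    (h₁ : a.mapDomain (Prod.fst ∘ e) = b.mapDomain (Prod.fst ∘ e))
    (h₂ : a.mapDomain (Prod.snd ∘ e) = b.mapDomain (Prod.snd ∘ e)) :
    addConGen (IsHomogeneousSquarefreeMove E) a b := by
  obtain ⟨n, hn⟩ : ∃ n, a.degree = n := ⟨_, rfl⟩
  induction n using Nat.strong_induction_on generalizing a b with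
  | _ n ih =>
  rcases eq_or_ne a 0 with rfl | ha
  · have hb : b.degree = 0 := by
      rw [← Finsupp.degree_mapDomain (Prod.fst ∘ e), ← h₁, Finsupp.mapDomain_zero, map_zero]
    rw [(Finsupp.degree_eq_zero_iff b).mp hb]
    exact AddCon.refl _ 0
  obtain ⟨χ, hχ⟩ := Finsupp.support_nonempty_iff.mpr ha
  have hχ' : 1 ≤ a χ := Nat.one_le_iff_ne_zero.mpr (Finsupp.mem_support_iff.mp hχ)
  have hmem : ∀ {ρ : Type} (g : σ₁ × σ₂ → ρ), g (e χ) ∈ (a.mapDomain (g ∘ e)).support :=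
    fun g => Finsupp.mem_support_iff.mpr
      (Nat.one_le_iff_ne_zero.mp (hχ'.trans (Finsupp.apply_le_mapDomain_apply (g ∘ e) a χ)))
  obtain ⟨b₀, hb, hb₁, hb₂⟩ :=
    hE.exists_addConGen_single_add (h₁ ▸ hmem Prod.fst) (h₂ ▸ hmem Prod.snd)
  have ha₀ : single χ 1 + (a - single χ 1) = a :=
    add_tsub_cancel_of_le (Finsupp.single_le_iff.mpr hχ')
  have hmarg : ∀ {ρ : Type} (g : σ₁ × σ₂ → ρ), a.mapDomain (g ∘ e) = b.mapDomain (g ∘ e) →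
      (single χ 1 + b₀).mapDomain (g ∘ e) = b.mapDomain (g ∘ e) →
      (a - single χ 1).mapDomain (g ∘ e) = b₀.mapDomain (g ∘ e) := by
    intro ρ g hab hb₀
    rw [← ha₀, Finsupp.mapDomain_add] at hab
    rw [Finsupp.mapDomain_add] at hb₀
    exact add_left_cancel (hab.trans hb₀.symm)
  have hdeg : (a - single χ 1).degree < n := by
    have := congrArg Finsupp.degree ha₀
    rw [map_add, Finsupp.degree_single] at this
    omega
  rw [← ha₀]
  exact AddCon.trans _ (AddCon.add _ (AddCon.refl _ _)
    (ih _ hdeg (hmarg Prod.fst h₁ hb₁) (hmarg Prod.snd h₂ hb₂) rfl)) (AddCon.symm _ hb)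

theorem isHomogeneousSquarefreeConnected (hE : IsProductConfiguration E E₁ E₂ e)
    (h₁ : IsHomogeneousSquarefreeConnected E₁) (h₂ : IsHomogeneousSquarefreeConnected E₂) :
    IsHomogeneousSquarefreeConnected E := by
  intro a b hab hdeg
  obtain ⟨hab₁, hab₂⟩ := (hE a b).mp hab
  obtain ⟨a₁, haa₁, ha₁, ha₁'⟩ := hE.liftsAlongFst_of_addConGen
    (h₁ _ _ hab₁ (by simp only [Finsupp.degree_mapDomain, hdeg])) a rfl
  have hdeg₁ : a₁.degree = b.degree := by
    rw [← Finsupp.degree_mapDomain (Prod.fst ∘ e) a₁, ha₁, Finsupp.degree_mapDomain]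
  obtain ⟨a₂, ha₁a₂, ha₂, ha₂'⟩ := hE.swap.liftsAlongFst_of_addConGen
    (h₂ (a₁.mapDomain (Prod.snd ∘ e)) _ (ha₁' ▸ hab₂)
      (by simp only [Finsupp.degree_mapDomain, hdeg₁])) a₁ rfl
  exact AddCon.trans _ haa₁ (AddCon.trans _ ha₁a₂
    (hE.addConGen_of_mapDomain_eq (ha₂'.trans ha₁) ha₂))

end IsProductConfiguration

end Product

section Isotonian

variable {P P₁ P₂ Q : Type} [PartialOrder P] [Fintype P] [PartialOrder P₁] [Fintype P₁]
  [PartialOrder P₂] [Fintype P₂] [PartialOrder Q]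

noncomputable def graphExponent (φ : P →o Q) : P × Q →₀ ℕ :=
  ∑ p, Finsupp.single (p, φ p) 1

theorem isotonianMap_eq_toricMap (K : Type) [Field K] [Fintype Q] :
    isotonianMap K P Q = toricMap K graphExponent := by
  rw [isotonianMap, toricMap]
  congr 1
  ext1 φ
  rw [graphExponent, monomial_sum_one]
  rfl

theorem graphExponent_apply [DecidableEq Q] (φ : P →o Q) (p : P) (q : Q) :
    graphExponent φ (p, q) = if φ p = q then 1 else 0 := by
  classical
  rw [graphExponent, Finsupp.finsetSum_apply, Finset.sum_eq_single p]
  · simp [Finsupp.single_apply]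
  · intro p' _ hp'
    simp [hp']
  · simp

theorem degree_graphExponent (φ : P →o Q) : (graphExponent φ).degree = Fintype.card P := by
  simp [graphExponent, Finsupp.degree_single, Finset.card_univ]

theorem isSquarefreeConnected_graphExponent_iff :
    IsSquarefreeConnected (graphExponent (P := P) (Q := Q)) ↔
      IsHomogeneousSquarefreeConnected (graphExponent (P := P) (Q := Q)) := by
  rcases isEmpty_or_nonempty P with hP | hP
  · have : Subsingleton (P →o Q) := ⟨fun φ ψ => OrderHom.ext _ _ (funext isEmptyElim)⟩
    exact iff_of_true (.of_forall_eq_zero fun φ => by simp [graphExponent]) .of_subsingleton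
  · refine isSquarefreeConnected_iff_homogeneous fun x y hxy => ?_
    have := congrArg Finsupp.degree hxy
    rwa [Finsupp.degree_linearCombination degree_graphExponent,
      Finsupp.degree_linearCombination degree_graphExponent,
      Nat.mul_left_cancel_iff Fintype.card_pos] at this

variable (P₁ P₂ Q) in
def orderHomSumEquiv : (P₁ ⊕ P₂ →o Q) ≃ (P₁ →o Q) × (P₂ →o Q) where
  toFun χ := (χ.comp ⟨Sum.inl, Sum.inl_mono⟩, χ.comp ⟨Sum.inr, Sum.inr_mono⟩)
  invFun φψ := ⟨Sum.elim φψ.1 φψ.2, fun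
    | .inl _, .inl _, h => φψ.1.monotone (Sum.inl_le_inl_iff.mp h)
    | .inr _, .inr _, h => φψ.2.monotone (Sum.inr_le_inr_iff.mp h)
    | .inl _, .inr _, h => absurd h Sum.not_inl_le_inr
    | .inr _, .inl _, h => absurd h Sum.not_inr_le_inl⟩
  left_inv χ := OrderHom.ext _ _ (funext fun p => by cases p <;> rfl)
  right_inv _ := rfl

theorem linearCombination_graphExponent_mapDomain_apply {P' : Type} [PartialOrder P']
    [Fintype P'] (ι : P' → P) (r : (P →o Q) → (P' →o Q)) (hr : ∀ χ p, r χ p = χ (ι p))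
    (x : (P →o Q) →₀ ℕ) (p : P') (q : Q) :
    linearCombination ℕ graphExponent (x.mapDomain r) (p, q) =
      linearCombination ℕ graphExponent x (ι p, q) := by
  classical
  rw [Finsupp.linearCombination_mapDomain]
  simp only [Finsupp.linearCombination_apply, Finsupp.sum_apply, Finsupp.smul_apply,
    Function.comp_apply, graphExponent_apply, hr]

theorem isProductConfiguration_graphExponent_sum :
    IsProductConfiguration (graphExponent (P := P₁ ⊕ P₂) (Q := Q)) graphExponent graphExponent
      (orderHomSumEquiv P₁ P₂ Q) := by
  have hinl := linearCombination_graphExponent_mapDomain_apply Sum.inl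
    (Prod.fst ∘ orderHomSumEquiv P₁ P₂ Q) fun _ _ => rfl
  have hinr := linearCombination_graphExponent_mapDomain_apply Sum.inr
    (Prod.snd ∘ orderHomSumEquiv P₁ P₂ Q) fun _ _ => rfl
  refine fun x y => ⟨fun h => ?_, fun ⟨h₁, h₂⟩ => ?_⟩
  · constructor <;> ext ⟨p, q⟩ <;> simp only [hinl, hinr, h]
  · ext ⟨p | p, q⟩
    · simpa only [hinl] using DFunLike.congr_fun h₁ (p, q)
    · simpa only [hinr] using DFunLike.congr_fun h₂ (p, q)

end Isotonian

/-- If `J_{P₁,Q}` and `J_{P₂,Q}` are generated by squarefree binomials, then so is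
`J_{P₁+P₂,Q}`, where `P₁ + P₂ = P₁ ⊕ P₂` is the disjoint sum of the two posets. -/
theorem statement9 (K P₁ P₂ Q : Type) [Field K] [PartialOrder P₁] [Fintype P₁]
    [PartialOrder P₂] [Fintype P₂] [PartialOrder Q] [Fintype Q]
    (h1 : isotonianIdeal K P₁ Q =
      Ideal.span {f | f ∈ isotonianIdeal K P₁ Q ∧ IsSquarefreeBinomial f})
    (h2 : isotonianIdeal K P₂ Q =
      Ideal.span {f | f ∈ isotonianIdeal K P₂ Q ∧ IsSquarefreeBinomial f}) :
    isotonianIdeal K (P₁ ⊕ P₂) Q =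
      Ideal.span {f | f ∈ isotonianIdeal K (P₁ ⊕ P₂) Q ∧ IsSquarefreeBinomial f} := by
  simp only [isotonianIdeal, isotonianMap_eq_toricMap, ker_toricMap_eq_span_squarefree_iff,
    isSquarefreeConnected_graphExponent_iff] at h1 h2 ⊢
  exact isProductConfiguration_graphExponent_sum.isHomogeneousSquarefreeConnected h1 h2
end
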